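/- Let (B, Δ, ε) be a bialgebra over a commutative ring k, let F be a Drinfel'd twist on B, and let R be a universal R-matrix on B. Then R_F := F₂₁·R·F⁻¹ is an invertible element of B⊗B and is a universal R-matrix on the twisted bialgebra (B, Δ_F, ε): τ(Δ_F(b)) = R_F·Δ_F(b)·R_F⁻¹ for all b ∈ B, and (Δ_F⊗id)(R_F) = (R_F)₁₃·(R_F)₂₃ and (id⊗Δ_F)(R_F) = (R_F)₁₃·(R_F)₁₂ in B⊗B⊗B. Moreover, if R is triangular, i.e. R₂₁ = R⁻¹, then R_F is triangular: (R_F)₂₁ = R_F⁻¹. -/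

import Mathlib

/-!
Everything takes place in `B ⊗ B ⊗ B`, among images of `F`, `R` under the leg embeddings and
under `Δ ⊗ id`, `id ⊗ Δ`, since `(Δ_F ⊗ id)(x) = F₁₂ (Δ ⊗ id)(x) F₁₂⁻¹` and
`(id ⊗ Δ_F)(x) = F₂₃ (id ⊗ Δ)(x) F₂₃⁻¹`. Quasi-cocommutativity of `R` says that conjugation by
`R₁₂`, `R₂₃`, `R₁₃` acts on such coproduct images as the transposition of the corresponding legs,
and applying a cyclic permutation of the legs to the cocycle identity
`F₁₂ (Δ ⊗ id)(F) = F₂₃ (id ⊗ Δ)(F)` lets `F₂₁` pass a coproduct of `F`. With the hexagon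
relations of `R` this turns `(Δ_F ⊗ id)(R_F)` into `F₃₁ R₁₃ F₁₃⁻¹ · F₃₂ R₂₃ F₂₃⁻¹`, and
symmetrically for `(id ⊗ Δ_F)(R_F)`.
-/

open TensorProduct

noncomputable section

namespace Stmt

variable (R : Type*) [CommRing R] (B : Type*) [Ring B] [Bialgebra R B]

/-- Comultiplication as an algebra homomorphism. -/
def Δ : B →ₐ[R] B ⊗[R] B := Bialgebra.comulAlgHom R B

/-- Counit as an algebra homomorphism. -/
def ε : B →ₐ[R] R := Bialgebra.counitAlgHom R B

/-- Flip of the two tensor factors of `B ⊗ B`. -/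
def τ : B ⊗[R] B ≃ₐ[R] B ⊗[R] B := Algebra.TensorProduct.comm R B B

/-- Leg embedding `x ↦ x₁₂` of `B ⊗ B` into `B ⊗ B ⊗ B`. -/
def ι₁₂ : B ⊗[R] B →ₐ[R] B ⊗[R] (B ⊗[R] B) :=
  Algebra.TensorProduct.map (AlgHom.id R B) Algebra.TensorProduct.includeLeft

/-- Leg embedding `x ↦ x₁₃` of `B ⊗ B` into `B ⊗ B ⊗ B`. -/
def ι₁₃ : B ⊗[R] B →ₐ[R] B ⊗[R] (B ⊗[R] B) :=
  Algebra.TensorProduct.map (AlgHom.id R B) Algebra.TensorProduct.includeRight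

/-- Leg embedding `x ↦ x₂₃` of `B ⊗ B` into `B ⊗ B ⊗ B`. -/
def ι₂₃ : B ⊗[R] B →ₐ[R] B ⊗[R] (B ⊗[R] B) :=
  Algebra.TensorProduct.includeRight

/-- `Δ ⊗ id : B ⊗ B → B ⊗ B ⊗ B` (re-associated). -/
def Δ₁ : B ⊗[R] B →ₐ[R] B ⊗[R] (B ⊗[R] B) :=
  (Algebra.TensorProduct.assoc R R R B B B).toAlgHom.comp
    (Algebra.TensorProduct.map (Δ R B) (AlgHom.id R B))

/-- `id ⊗ Δ : B ⊗ B → B ⊗ B ⊗ B`. -/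
def Δ₂ : B ⊗[R] B →ₐ[R] B ⊗[R] (B ⊗[R] B) :=
  Algebra.TensorProduct.map (AlgHom.id R B) (Δ R B)

/-- `ε ⊗ id : B ⊗ B → B`. -/
def ε₁ : B ⊗[R] B →ₐ[R] B :=
  (Algebra.TensorProduct.lid R B).toAlgHom.comp
    (Algebra.TensorProduct.map (ε R B) (AlgHom.id R B))

/-- `id ⊗ ε : B ⊗ B → B`. -/
def ε₂ : B ⊗[R] B →ₐ[R] B :=
  (Algebra.TensorProduct.rid R R B).toAlgHom.comp
    (Algebra.TensorProduct.map (AlgHom.id R B) (ε R B))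

/-- The twisted coproduct `Δ_F(b) = F · Δ(b) · F⁻¹` as a `k`-linear map. -/
def DeltaF (F Finv : B ⊗[R] B) : B →ₗ[R] B ⊗[R] B :=
  (LinearMap.mulRight R Finv) ∘ₗ (LinearMap.mulLeft R F) ∘ₗ
    (Coalgebra.comul (R := R) (A := B))

/-- The twisted R-matrix `R_F := F₂₁ · R · F⁻¹`. -/
def RF (F Finv Rm : B ⊗[R] B) : B ⊗[R] B := τ R B F * Rm * Finv

/-- Cyclic permutation `a ⊗ b ⊗ c ↦ b ⊗ c ⊗ a` of the legs. -/
def rotLeft : B ⊗[R] (B ⊗[R] B) →ₐ[R] B ⊗[R] (B ⊗[R] B) :=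
  (Algebra.TensorProduct.assoc R R R B B B).toAlgHom.comp
    (Algebra.TensorProduct.comm R B (B ⊗[R] B)).toAlgHom

/-- Cyclic permutation `a ⊗ b ⊗ c ↦ c ⊗ a ⊗ b` of the legs. -/
def rotRight : B ⊗[R] (B ⊗[R] B) →ₐ[R] B ⊗[R] (B ⊗[R] B) :=
  (Algebra.TensorProduct.comm R (B ⊗[R] B) B).toAlgHom.comp
    (Algebra.TensorProduct.assoc R R R B B B).symm.toAlgHom

def swap₁₂ : B ⊗[R] (B ⊗[R] B) →ₐ[R] B ⊗[R] (B ⊗[R] B) :=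
  (Algebra.TensorProduct.assoc R R R B B B).toAlgHom.comp
    ((Algebra.TensorProduct.map (τ R B).toAlgHom (AlgHom.id R B)).comp
      (Algebra.TensorProduct.assoc R R R B B B).symm.toAlgHom)

def swap₂₃ : B ⊗[R] (B ⊗[R] B) →ₐ[R] B ⊗[R] (B ⊗[R] B) :=
  Algebra.TensorProduct.map (AlgHom.id R B) (τ R B).toAlgHom

def invRF (F Finv Rm' : B ⊗[R] B) : B ⊗[R] B := F * Rm' * τ R B Finv

section MonoidIdentities

variable {M : Type*} [Monoid M] {a b c d a' b' c' d' : M}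

theorem mul_inv_eq_inv_mul_of_mul_eq_mul (ha : a' * a = 1) (hd : d * d' = 1)
    (h : a * b = c * d) : b * d' = a' * c :=
  calc b * d' = a' * (a * b) * d' := by rw [← mul_assoc, ha, one_mul]
    _ = a' * c := by rw [h, mul_assoc, mul_assoc, hd, mul_one]

theorem inv_mul_inv_eq_of_mul_eq_mul (ha : a' * a = 1) (hb : b' * b = 1) (hc : c * c' = 1)
    (hd : d * d' = 1) (h : a * b = c * d) : b' * a' = d' * c' :=
  calc b' * a' = b' * a' * (c * d * (d' * c')) := by
        rw [mul_assoc c, ← mul_assoc d, hd, one_mul, hc, mul_one]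
    _ = b' * (a' * a) * b * (d' * c') := by rw [← h]; simp only [mul_assoc]
    _ = d' * c' := by rw [ha, mul_one, hb, one_mul]

end MonoidIdentities

variable {R B}

theorem mul_map_eq_map_mul_of_tmul {A C D : Type*} [Ring A] [Algebra R A] [Ring C] [Algebra R C]
    [Ring D] [Algebra R D] (f g : A ⊗[R] C →ₐ[R] D) (u : D)
    (hl : ∀ a, u * f (a ⊗ₜ 1) = g (a ⊗ₜ 1) * u) (hr : ∀ c, u * f (1 ⊗ₜ c) = g (1 ⊗ₜ c) * u)
    (x : A ⊗[R] C) : u * f x = g x * u := by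
  induction x using TensorProduct.induction_on with
  | zero => simp
  | tmul a c =>
    rw [← mul_one a, ← one_mul c, ← Algebra.TensorProduct.tmul_mul_tmul, map_mul, map_mul,
      ← mul_assoc, hl, mul_assoc, hr, mul_assoc]
  | add x y hx hy => rw [map_add, map_add, mul_add, add_mul, hx, hy]

theorem τ_τ (x : B ⊗[R] B) : τ R B (τ R B x) = x := by
  have := (τ R B).symm_apply_apply x
  rwa [τ, Algebra.TensorProduct.comm_symm] at this

section Legs

variable (x : B ⊗[R] B)

theorem rotLeft_ι₁₂ : rotLeft R B (ι₁₂ R B x) = ι₁₃ R B (τ R B x) := by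
  have : (rotLeft R B).comp (ι₁₂ R B) = (ι₁₃ R B).comp (τ R B).toAlgHom := by
    ext b <;> simp [rotLeft, τ, ι₁₂, ι₁₃]
  exact DFunLike.congr_fun this x

theorem rotLeft_ι₂₃ : rotLeft R B (ι₂₃ R B x) = ι₁₂ R B x := by
  have : (rotLeft R B).comp (ι₂₃ R B) = ι₁₂ R B := by
    ext b <;> simp [rotLeft, ι₁₂, ι₂₃, Algebra.TensorProduct.one_def]
  exact DFunLike.congr_fun this x

theorem rotRight_ι₁₂ : rotRight R B (ι₁₂ R B x) = ι₂₃ R B x := by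
  have : (rotRight R B).comp (ι₁₂ R B) = ι₂₃ R B := by
    ext b <;> simp [rotRight, ι₁₂, ι₂₃]
  exact DFunLike.congr_fun this x

theorem rotRight_ι₂₃ : rotRight R B (ι₂₃ R B x) = ι₁₃ R B (τ R B x) := by
  have : (rotRight R B).comp (ι₂₃ R B) = (ι₁₃ R B).comp (τ R B).toAlgHom := by
    ext b <;> simp [rotRight, τ, ι₁₃, ι₂₃]
  exact DFunLike.congr_fun this x

theorem swap₁₂_ι₁₂ : swap₁₂ R B (ι₁₂ R B x) = ι₁₂ R B (τ R B x) := by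
  have : (swap₁₂ R B).comp (ι₁₂ R B) = (ι₁₂ R B).comp (τ R B).toAlgHom := by
    ext b <;> simp [swap₁₂, τ, ι₁₂]
  exact DFunLike.congr_fun this x

theorem swap₁₂_ι₂₃ : swap₁₂ R B (ι₂₃ R B x) = ι₁₃ R B x := by
  have : (swap₁₂ R B).comp (ι₂₃ R B) = ι₁₃ R B := by
    ext b <;> simp [swap₁₂, τ, ι₁₃, ι₂₃, Algebra.TensorProduct.one_def]
  exact DFunLike.congr_fun this x

theorem swap₂₃_ι₁₂ : swap₂₃ R B (ι₁₂ R B x) = ι₁₃ R B x := by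
  have : (swap₂₃ R B).comp (ι₁₂ R B) = ι₁₃ R B := by
    ext b <;> simp [swap₂₃, τ, ι₁₂, ι₁₃, Algebra.TensorProduct.one_def]
  exact DFunLike.congr_fun this x

theorem swap₂₃_ι₂₃ : swap₂₃ R B (ι₂₃ R B x) = ι₂₃ R B (τ R B x) := by
  have : (swap₂₃ R B).comp (ι₂₃ R B) = (ι₂₃ R B).comp (τ R B).toAlgHom := by
    ext b <;> simp [swap₂₃, τ, ι₂₃]
  exact DFunLike.congr_fun this x

theorem commute_ι₁₂ (b : B) : Commute (ι₁₂ R B x) (1 ⊗ₜ (1 ⊗ₜ b)) := by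
  induction x using TensorProduct.induction_on with
  | zero => simp
  | tmul c d => simp [Commute, SemiconjBy, ι₁₂, Algebra.TensorProduct.tmul_mul_tmul]
  | add x y hx hy => simpa only [map_add] using hx.add_left hy

theorem commute_ι₁₃ (b : B) : Commute (ι₁₃ R B x) (1 ⊗ₜ (b ⊗ₜ 1)) := by
  induction x using TensorProduct.induction_on with
  | zero => simp
  | tmul c d => simp [Commute, SemiconjBy, ι₁₃, Algebra.TensorProduct.tmul_mul_tmul]
  | add x y hx hy => simpa only [map_add] using hx.add_left hy

theorem commute_ι₂₃ (b : B) : Commute (ι₂₃ R B x) (b ⊗ₜ 1) := by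
  simp [Commute, SemiconjBy, ι₂₃, Algebra.TensorProduct.tmul_mul_tmul]

end Legs

theorem assoc_tmul_one (y : B ⊗[R] B) :
    Algebra.TensorProduct.assoc R R R B B B (y ⊗ₜ 1) = ι₁₂ R B y := by
  induction y using TensorProduct.induction_on with
  | zero => simp
  | tmul c d => simp [ι₁₂]
  | add y z hy hz => simp [add_tmul, hy, hz]

section Coproduct

variable (b : B)

theorem Δ₁_tmul_one : Δ₁ R B (b ⊗ₜ 1) = ι₁₂ R B (Δ R B b) := by
  simpa [Δ₁] using assoc_tmul_one (Δ R B b)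

theorem Δ₁_one_tmul : Δ₁ R B (1 ⊗ₜ b) = 1 ⊗ₜ (1 ⊗ₜ b) := by
  simp [Δ₁, Algebra.TensorProduct.one_def]

theorem Δ₂_tmul_one : Δ₂ R B (b ⊗ₜ 1) = b ⊗ₜ 1 := by
  simp [Δ₂]

theorem Δ₂_one_tmul : Δ₂ R B (1 ⊗ₜ b) = ι₂₃ R B (Δ R B b) := by
  simp [Δ₂, ι₂₃]

end Coproduct

theorem rotLeft_Δ₂ (x : B ⊗[R] B) : rotLeft R B (Δ₂ R B x) = Δ₁ R B (τ R B x) := by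
  have : (rotLeft R B).comp (Δ₂ R B) = (Δ₁ R B).comp (τ R B).toAlgHom := by
    ext b
    · simp [Δ₂_tmul_one, τ, Δ₁_one_tmul, rotLeft, Algebra.TensorProduct.one_def]
    · simp [Δ₂_one_tmul, rotLeft_ι₂₃, τ, Δ₁_tmul_one]
  exact DFunLike.congr_fun this x

theorem rotRight_Δ₁ (x : B ⊗[R] B) : rotRight R B (Δ₁ R B x) = Δ₂ R B (τ R B x) := by
  have : (rotRight R B).comp (Δ₁ R B) = (Δ₂ R B).comp (τ R B).toAlgHom := by
    ext b
    · simp [Δ₁_tmul_one, rotRight_ι₁₂, τ, Δ₂_one_tmul]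
    · simp [Δ₁_one_tmul, τ, Δ₂_tmul_one, rotRight, Algebra.TensorProduct.one_def]
  exact DFunLike.congr_fun this x

section Intertwining

variable {Rm : B ⊗[R] B} (hRΔ : ∀ b, Rm * Δ R B b = τ R B (Δ R B b) * Rm) (x : B ⊗[R] B)
include hRΔ

theorem ι₁₂_mul_Δ₁ : ι₁₂ R B Rm * Δ₁ R B x = swap₁₂ R B (Δ₁ R B x) * ι₁₂ R B Rm := by
  refine mul_map_eq_map_mul_of_tmul (Δ₁ R B) ((swap₁₂ R B).comp (Δ₁ R B)) _ (fun a => ?_)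
    (fun c => ?_) x
  · rw [AlgHom.comp_apply, Δ₁_tmul_one, swap₁₂_ι₁₂, ← map_mul, hRΔ, map_mul]
  · rw [AlgHom.comp_apply, Δ₁_one_tmul, (commute_ι₁₂ Rm c).eq]
    simp [swap₁₂, τ]

theorem ι₂₃_mul_Δ₂ : ι₂₃ R B Rm * Δ₂ R B x = swap₂₃ R B (Δ₂ R B x) * ι₂₃ R B Rm := by
  refine mul_map_eq_map_mul_of_tmul (Δ₂ R B) ((swap₂₃ R B).comp (Δ₂ R B)) _ (fun a => ?_)
    (fun c => ?_) x
  · rw [AlgHom.comp_apply, Δ₂_tmul_one, (commute_ι₂₃ Rm a).eq]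
    simp [swap₂₃]
  · rw [AlgHom.comp_apply, Δ₂_one_tmul, swap₂₃_ι₂₃, ← map_mul, hRΔ, map_mul]

theorem ι₁₃_mul_swap₂₃_Δ₁ :
    ι₁₃ R B Rm * swap₂₃ R B (Δ₁ R B x) = rotLeft R B (Δ₁ R B x) * ι₁₃ R B Rm := by
  refine mul_map_eq_map_mul_of_tmul ((swap₂₃ R B).comp (Δ₁ R B)) ((rotLeft R B).comp (Δ₁ R B))
    _ (fun a => ?_) (fun c => ?_) x
  · rw [AlgHom.comp_apply, AlgHom.comp_apply, Δ₁_tmul_one, swap₂₃_ι₁₂, rotLeft_ι₁₂, ← map_mul,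
      hRΔ, map_mul]
  · have hswap : swap₂₃ R B (1 ⊗ₜ (1 ⊗ₜ c)) = 1 ⊗ₜ (c ⊗ₜ 1) := by simp [swap₂₃, τ]
    have hrot : rotLeft R B (1 ⊗ₜ (1 ⊗ₜ c)) = 1 ⊗ₜ (c ⊗ₜ 1) := by simp [rotLeft]
    rw [AlgHom.comp_apply, AlgHom.comp_apply, Δ₁_one_tmul, hswap, hrot, (commute_ι₁₃ Rm c).eq]

theorem ι₁₃_mul_swap₁₂_Δ₂ :
    ι₁₃ R B Rm * swap₁₂ R B (Δ₂ R B x) = rotRight R B (Δ₂ R B x) * ι₁₃ R B Rm := by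
  refine mul_map_eq_map_mul_of_tmul ((swap₁₂ R B).comp (Δ₂ R B)) ((rotRight R B).comp (Δ₂ R B))
    _ (fun a => ?_) (fun c => ?_) x
  · have hswap : swap₁₂ R B (a ⊗ₜ 1) = 1 ⊗ₜ (a ⊗ₜ 1) := by
      simp [swap₁₂, τ, Algebra.TensorProduct.one_def]
    have hrot : rotRight R B (a ⊗ₜ 1) = 1 ⊗ₜ (a ⊗ₜ 1) := by
      simp [rotRight, Algebra.TensorProduct.one_def]
    rw [AlgHom.comp_apply, AlgHom.comp_apply, Δ₂_tmul_one, hswap, hrot, (commute_ι₁₃ Rm a).eq]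
  · rw [AlgHom.comp_apply, AlgHom.comp_apply, Δ₂_one_tmul, swap₁₂_ι₂₃, rotRight_ι₂₃, ← map_mul,
      hRΔ, map_mul]

end Intertwining

section Cocycle

variable {F Finv : B ⊗[R] B}

theorem map_mul_map_inv {D : Type*} [Ring D] [Algebra R D] (φ : B ⊗[R] B →ₐ[R] D)
    (hF : F * Finv = 1) : φ F * φ Finv = 1 := by
  rw [← map_mul, hF, map_one]

variable (hF : F * Finv = 1) (hF' : Finv * F = 1)
  (hcoc : ι₁₂ R B F * Δ₁ R B F = ι₂₃ R B F * Δ₂ R B F)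
include hF hF' hcoc

theorem cocycle_inv : Δ₁ R B Finv * ι₁₂ R B Finv = Δ₂ R B Finv * ι₂₃ R B Finv :=
  inv_mul_inv_eq_of_mul_eq_mul (map_mul_map_inv _ hF') (map_mul_map_inv _ hF')
    (map_mul_map_inv _ hF) (map_mul_map_inv _ hF) hcoc

theorem Δ₁_mul_Δ₂_inv : Δ₁ R B F * Δ₂ R B Finv = ι₁₂ R B Finv * ι₂₃ R B F :=
  mul_inv_eq_inv_mul_of_mul_eq_mul (map_mul_map_inv _ hF') (map_mul_map_inv _ hF) hcoc

theorem Δ₂_mul_Δ₁_inv : Δ₂ R B F * Δ₁ R B Finv = ι₂₃ R B Finv * ι₁₂ R B F :=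
  mul_inv_eq_inv_mul_of_mul_eq_mul (map_mul_map_inv _ hF') (map_mul_map_inv _ hF) hcoc.symm

end Cocycle

theorem cocycle_rotLeft {F : B ⊗[R] B} (hcoc : ι₁₂ R B F * Δ₁ R B F = ι₂₃ R B F * Δ₂ R B F) :
    ι₁₂ R B F * Δ₁ R B (τ R B F) = ι₁₃ R B (τ R B F) * rotLeft R B (Δ₁ R B F) := by
  have h := congrArg (rotLeft R B) hcoc
  rw [map_mul, map_mul, rotLeft_ι₁₂, rotLeft_ι₂₃, rotLeft_Δ₂] at h
  exact h.symm

theorem cocycle_rotRight {F : B ⊗[R] B} (hcoc : ι₁₂ R B F * Δ₁ R B F = ι₂₃ R B F * Δ₂ R B F) :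
    ι₂₃ R B F * Δ₂ R B (τ R B F) = ι₁₃ R B (τ R B F) * rotRight R B (Δ₂ R B F) := by
  have h := congrArg (rotRight R B) hcoc
  rw [map_mul, map_mul, rotRight_ι₁₂, rotRight_ι₂₃, rotRight_Δ₁] at h
  exact h

section TwistedCoproduct

variable (F Finv : B ⊗[R] B)

theorem DeltaF_apply (b : B) : DeltaF R B F Finv b = F * Δ R B b * Finv := rfl

theorem assoc_map_DeltaF_id (x : B ⊗[R] B) :
    TensorProduct.assoc R B B B (TensorProduct.map (DeltaF R B F Finv) LinearMap.id x) =
      ι₁₂ R B F * Δ₁ R B x * ι₁₂ R B Finv := by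
  induction x using TensorProduct.induction_on with
  | zero => simp
  | tmul a b =>
    have hsplit : (F * Δ R B a * Finv) ⊗ₜ b =
        (F ⊗ₜ[R] (1 : B)) * (Δ R B a ⊗ₜ b) * (Finv ⊗ₜ[R] (1 : B)) := by
      simp [Algebra.TensorProduct.tmul_mul_tmul]
    change Algebra.TensorProduct.assoc R R R B B B ((F * Δ R B a * Finv) ⊗ₜ b) = _
    rw [hsplit, map_mul, map_mul, assoc_tmul_one, assoc_tmul_one]
    rfl
  | add x y hx hy => simp only [map_add, hx, hy, mul_add, add_mul]

theorem map_id_DeltaF (x : B ⊗[R] B) :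
    TensorProduct.map LinearMap.id (DeltaF R B F Finv) x =
      ι₂₃ R B F * Δ₂ R B x * ι₂₃ R B Finv := by
  induction x using TensorProduct.induction_on with
  | zero => simp
  | tmul a b =>
    rw [TensorProduct.map_tmul, DeltaF_apply, LinearMap.id_apply]
    simp [ι₂₃, Δ₂, Algebra.TensorProduct.tmul_mul_tmul]
  | add x y hx hy => simp only [map_add, hx, hy, mul_add, add_mul]

end TwistedCoproduct

section TwistedRMatrix

variable {F Finv Rm Rm' : B ⊗[R] B}

theorem RF_mul_invRF (hF : F * Finv = 1) (hF' : Finv * F = 1) (hR : Rm * Rm' = 1) :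
    RF R B F Finv Rm * invRF R B F Finv Rm' = 1 :=
  calc RF R B F Finv Rm * invRF R B F Finv Rm'
      = τ R B F * (Rm * ((Finv * F) * Rm')) * τ R B Finv := by
        simp only [RF, invRF, mul_assoc]
    _ = 1 := by rw [hF', one_mul, hR, mul_one, ← map_mul, hF, map_one]

theorem invRF_mul_RF (hF : F * Finv = 1) (hF' : Finv * F = 1) (hR' : Rm' * Rm = 1) :
    invRF R B F Finv Rm' * RF R B F Finv Rm = 1 :=
  calc invRF R B F Finv Rm' * RF R B F Finv Rm
      = F * (Rm' * ((τ R B Finv * τ R B F) * Rm)) * Finv := by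
        simp only [RF, invRF, mul_assoc]
    _ = 1 := by rw [← map_mul, hF', map_one, one_mul, hR', mul_one, hF]

theorem τ_DeltaF (hF' : Finv * F = 1) (hqc : ∀ b : B, τ R B (Δ R B b) = Rm * Δ R B b * Rm')
    (b : B) :
    τ R B (DeltaF R B F Finv b) =
      RF R B F Finv Rm * DeltaF R B F Finv b * invRF R B F Finv Rm' :=
  calc τ R B (DeltaF R B F Finv b)
      = τ R B F * (Rm * Δ R B b * Rm') * τ R B Finv := by rw [DeltaF_apply, map_mul, map_mul, hqc]
    _ = τ R B F * (Rm * ((Finv * F) * Δ R B b * (Finv * F)) * Rm') * τ R B Finv := by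
        rw [hF', one_mul, mul_one]
    _ = RF R B F Finv Rm * DeltaF R B F Finv b * invRF R B F Finv Rm' := by
        simp only [RF, invRF, DeltaF_apply, mul_assoc]

theorem hexagon₁_RF (hF : F * Finv = 1) (hF' : Finv * F = 1)
    (hcoc : ι₁₂ R B F * Δ₁ R B F = ι₂₃ R B F * Δ₂ R B F)
    (hRΔ : ∀ b, Rm * Δ R B b = τ R B (Δ R B b) * Rm)
    (hhex₁ : Δ₁ R B Rm = ι₁₃ R B Rm * ι₂₃ R B Rm) :
    TensorProduct.assoc R B B B
        (TensorProduct.map (DeltaF R B F Finv) LinearMap.id (RF R B F Finv Rm)) =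
      ι₁₃ R B (RF R B F Finv Rm) * ι₂₃ R B (RF R B F Finv Rm) := by
  rw [assoc_map_DeltaF_id]
  calc ι₁₂ R B F * Δ₁ R B (RF R B F Finv Rm) * ι₁₂ R B Finv
      = ι₁₂ R B F * Δ₁ R B (τ R B F) * ι₁₃ R B Rm * (ι₂₃ R B Rm * Δ₂ R B Finv) *
          ι₂₃ R B Finv := by
        rw [RF, map_mul, map_mul, hhex₁]
        simp only [mul_assoc]
        rw [cocycle_inv hF hF' hcoc]
    _ = ι₁₃ R B (τ R B F) * (rotLeft R B (Δ₁ R B F) * ι₁₃ R B Rm) *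
          swap₂₃ R B (Δ₂ R B Finv) * ι₂₃ R B Rm * ι₂₃ R B Finv := by
        rw [cocycle_rotLeft hcoc, ι₂₃_mul_Δ₂ hRΔ]
        simp only [mul_assoc]
    _ = ι₁₃ R B (τ R B F) * ι₁₃ R B Rm * swap₂₃ R B (Δ₁ R B F * Δ₂ R B Finv) *
          ι₂₃ R B Rm * ι₂₃ R B Finv := by
        rw [← ι₁₃_mul_swap₂₃_Δ₁ hRΔ, map_mul]
        simp only [mul_assoc]
    _ = ι₁₃ R B (RF R B F Finv Rm) * ι₂₃ R B (RF R B F Finv Rm) := by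
        rw [Δ₁_mul_Δ₂_inv hF hF' hcoc, map_mul, swap₂₃_ι₁₂, swap₂₃_ι₂₃, RF, map_mul, map_mul,
          map_mul, map_mul]
        simp only [mul_assoc]

theorem hexagon₂_RF (hF : F * Finv = 1) (hF' : Finv * F = 1)
    (hcoc : ι₁₂ R B F * Δ₁ R B F = ι₂₃ R B F * Δ₂ R B F)
    (hRΔ : ∀ b, Rm * Δ R B b = τ R B (Δ R B b) * Rm)
    (hhex₂ : Δ₂ R B Rm = ι₁₃ R B Rm * ι₁₂ R B Rm) :
    TensorProduct.map LinearMap.id (DeltaF R B F Finv) (RF R B F Finv Rm) =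
      ι₁₃ R B (RF R B F Finv Rm) * ι₁₂ R B (RF R B F Finv Rm) := by
  rw [map_id_DeltaF]
  calc ι₂₃ R B F * Δ₂ R B (RF R B F Finv Rm) * ι₂₃ R B Finv
      = ι₂₃ R B F * Δ₂ R B (τ R B F) * ι₁₃ R B Rm * (ι₁₂ R B Rm * Δ₁ R B Finv) *
          ι₁₂ R B Finv := by
        rw [RF, map_mul, map_mul, hhex₂]
        simp only [mul_assoc]
        rw [← cocycle_inv hF hF' hcoc]
    _ = ι₁₃ R B (τ R B F) * (rotRight R B (Δ₂ R B F) * ι₁₃ R B Rm) *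
          swap₁₂ R B (Δ₁ R B Finv) * ι₁₂ R B Rm * ι₁₂ R B Finv := by
        rw [cocycle_rotRight hcoc, ι₁₂_mul_Δ₁ hRΔ]
        simp only [mul_assoc]
    _ = ι₁₃ R B (τ R B F) * ι₁₃ R B Rm * swap₁₂ R B (Δ₂ R B F * Δ₁ R B Finv) *
          ι₁₂ R B Rm * ι₁₂ R B Finv := by
        rw [← ι₁₃_mul_swap₁₂_Δ₂ hRΔ, map_mul]
        simp only [mul_assoc]
    _ = ι₁₃ R B (RF R B F Finv Rm) * ι₁₂ R B (RF R B F Finv Rm) := by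
        rw [Δ₂_mul_Δ₁_inv hF hF' hcoc, map_mul, swap₁₂_ι₂₃, swap₁₂_ι₁₂, RF, map_mul, map_mul,
          map_mul, map_mul]
        simp only [mul_assoc]

theorem τ_RF (hRm : τ R B Rm = Rm') : τ R B (RF R B F Finv Rm) = invRF R B F Finv Rm' := by
  rw [RF, invRF, map_mul, map_mul, τ_τ, hRm]

end TwistedRMatrix

theorem twisted_R_matrix_general
    (F Finv Rm Rm' : B ⊗[R] B)
    -- `F` is a Drinfel'd twist:
    (hF : F * Finv = 1) (hF' : Finv * F = 1)
    (hcoc : ι₁₂ R B F * Δ₁ R B F = ι₂₃ R B F * Δ₂ R B F)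
    -- `Rm` is a universal R-matrix:
    (hR : Rm * Rm' = 1) (hR' : Rm' * Rm = 1)
    (hqc : ∀ b : B, τ R B (Δ R B b) = Rm * Δ R B b * Rm')
    (hhex₁ : Δ₁ R B Rm = ι₁₃ R B Rm * ι₂₃ R B Rm)
    (hhex₂ : Δ₂ R B Rm = ι₁₃ R B Rm * ι₁₂ R B Rm) :
    ∃ RFinv : B ⊗[R] B,
      -- `R_F` is invertible:
      RF R B F Finv Rm * RFinv = 1 ∧ RFinv * RF R B F Finv Rm = 1 ∧
      -- quasi-cocommutativity of `Δ_F` with respect to `R_F`: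
      (∀ b : B,
        τ R B (DeltaF R B F Finv b) = RF R B F Finv Rm * DeltaF R B F Finv b * RFinv) ∧
      -- hexagon relations for `R_F` with respect to `Δ_F`:
      (TensorProduct.assoc R B B B)
          ((TensorProduct.map (DeltaF R B F Finv) LinearMap.id) (RF R B F Finv Rm)) =
        ι₁₃ R B (RF R B F Finv Rm) * ι₂₃ R B (RF R B F Finv Rm) ∧
      (TensorProduct.map LinearMap.id (DeltaF R B F Finv)) (RF R B F Finv Rm) =
        ι₁₃ R B (RF R B F Finv Rm) * ι₁₂ R B (RF R B F Finv Rm) ∧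
      -- if `Rm` is triangular, so is `R_F`:
      (τ R B Rm = Rm' → τ R B (RF R B F Finv Rm) = RFinv) := by
  have hRΔ (b : B) : Rm * Δ R B b = τ R B (Δ R B b) * Rm := by
    rw [hqc, mul_assoc _ Rm', hR', mul_one]
  exact ⟨invRF R B F Finv Rm', RF_mul_invRF hF hF' hR, invRF_mul_RF hF hF' hR',
    τ_DeltaF hF' hqc, hexagon₁_RF hF hF' hcoc hRΔ hhex₁, hexagon₂_RF hF hF' hcoc hRΔ hhex₂,
    τ_RF⟩

/-- **Twisting a universal R-matrix.**  If `F` is a Drinfel'd twist (with two-sided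
inverse `Finv`) and `Rm` a universal R-matrix (with two-sided inverse `Rm'`) on a
bialgebra `B`, then `R_F = F₂₁ · Rm · F⁻¹` has a two-sided inverse and is a universal
R-matrix on the twisted bialgebra `(B, Δ_F, ε)`; if `Rm` is triangular then so is
`R_F`. -/
theorem twisted_R_matrix
    (F Finv Rm Rm' : B ⊗[R] B)
    -- `F` is a Drinfel'd twist:
    (hF : F * Finv = 1) (hF' : Finv * F = 1)
    (hnorm₁ : ε₁ R B F = 1) (hnorm₂ : ε₂ R B F = 1)
    (hcoc : ι₁₂ R B F * Δ₁ R B F = ι₂₃ R B F * Δ₂ R B F)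
    -- `Rm` is a universal R-matrix:
    (hR : Rm * Rm' = 1) (hR' : Rm' * Rm = 1)
    (hqc : ∀ b : B, τ R B (Δ R B b) = Rm * Δ R B b * Rm')
    (hhex₁ : Δ₁ R B Rm = ι₁₃ R B Rm * ι₂₃ R B Rm)
    (hhex₂ : Δ₂ R B Rm = ι₁₃ R B Rm * ι₁₂ R B Rm) :
    ∃ RFinv : B ⊗[R] B,
      -- `R_F` is invertible:
      RF R B F Finv Rm * RFinv = 1 ∧ RFinv * RF R B F Finv Rm = 1 ∧
      -- quasi-cocommutativity of `Δ_F` with respect to `R_F`: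
      (∀ b : B,
        τ R B (DeltaF R B F Finv b) = RF R B F Finv Rm * DeltaF R B F Finv b * RFinv) ∧
      -- hexagon relations for `R_F` with respect to `Δ_F`:
      (TensorProduct.assoc R B B B)
          ((TensorProduct.map (DeltaF R B F Finv) LinearMap.id) (RF R B F Finv Rm)) =
        ι₁₃ R B (RF R B F Finv Rm) * ι₂₃ R B (RF R B F Finv Rm) ∧
      (TensorProduct.map LinearMap.id (DeltaF R B F Finv)) (RF R B F Finv Rm) =
        ι₁₃ R B (RF R B F Finv Rm) * ι₁₂ R B (RF R B F Finv Rm) ∧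
      -- if `Rm` is triangular, so is `R_F`:
      (τ R B Rm = Rm' → τ R B (RF R B F Finv Rm) = RFinv) :=
  twisted_R_matrix_general F Finv Rm Rm' hF hF' hcoc hR hR' hqc hhex₁ hhex₂

end Stmt
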